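/- arXiv:2007.06607 — 7 statements merged into one kernel-verified Lean document; each statement's English description precedes it below -/
import Mathlib

section
/- For δ ∈ (0,1) and all θ, θ̃ > 0, Λ_δ(θ, θ̃) = (1/(δ+1))·[(θ^δ - θ̃^δ)(θ - θ̃) + θ̃^δ·(θ - θ̃ - (1/δ)·θ̃^{1-δ}·(θ^δ - θ̃^δ))], and both summands on the right-hand side are nonnegative; in particular Λ_δ(θ, θ̃) ≥ 0. -/
open Real

/-! The identity is pure algebra once `θ^(δ+1) = θ^δ θ` and `θ̃^δ θ̃^(1-δ) = θ̃`. The first summand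
is nonnegative because `s ↦ s^δ` is monotone; the second because the weighted AM–GM inequality
`θ^δ θ̃^(1-δ) ≤ δ θ + (1-δ) θ̃` is exactly the tangent-line bound of the concave map `s ↦ s^δ`
at `θ̃`. -/

namespace Real

lemma rpow_sub_rpow_mul_sub_nonneg {p x y : ℝ} (hp : 0 ≤ p) (hx : 0 ≤ x) (hy : 0 ≤ y) :
    0 ≤ (x ^ p - y ^ p) * (x - y) := by
  rcases le_total x y with hxy | hyx
  · exact mul_nonneg_of_nonpos_of_nonpos
      (sub_nonpos.2 (rpow_le_rpow hx hxy hp)) (sub_nonpos.2 hxy)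
  · exact mul_nonneg (sub_nonneg.2 (rpow_le_rpow hy hyx hp)) (sub_nonneg.2 hyx)

lemma rpow_mul_rpow_sub_rpow_le {p x y : ℝ} (hp0 : 0 ≤ p) (hp1 : p ≤ 1) (hx : 0 ≤ x)
    (hy : 0 ≤ y) : y ^ (1 - p) * (x ^ p - y ^ p) ≤ p * (x - y) := by
  have amgm : x ^ p * y ^ (1 - p) ≤ p * x + (1 - p) * y :=
    geom_mean_le_arith_mean2_weighted hp0 (sub_nonneg.2 hp1) hx hy (by ring)
  have hy_split : y ^ (1 - p) * y ^ p = y := by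
    rw [← rpow_add' hy (by norm_num), sub_add_cancel, rpow_one]
  linarith

lemma inv_mul_rpow_mul_rpow_sub_rpow_le {p x y : ℝ} (hp0 : 0 < p) (hp1 : p ≤ 1) (hx : 0 ≤ x)
    (hy : 0 ≤ y) : 1 / p * y ^ (1 - p) * (x ^ p - y ^ p) ≤ x - y := by
  rw [mul_assoc, one_div, inv_mul_le_iff₀ hp0]
  exact rpow_mul_rpow_sub_rpow_le hp0.le hp1 hx hy

lemma rpow_bregman_eq {p x y : ℝ} (hp0 : p ≠ 0) (hp1 : p + 1 ≠ 0) (hx : 0 ≤ x) (hy : 0 ≤ y) :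
    -x ^ (p + 1) / (p * (p + 1)) - -y ^ (p + 1) / (p * (p + 1)) - -x ^ p / p * (x - y) =
      1 / (p + 1) * ((x ^ p - y ^ p) * (x - y)
        + y ^ p * (x - y - 1 / p * y ^ (1 - p) * (x ^ p - y ^ p))) := by
  have hx_succ : x ^ (p + 1) = x ^ p * x := by rw [rpow_add' hx hp1, rpow_one]
  have hy_succ : y ^ (p + 1) = y ^ p * y := by rw [rpow_add' hy hp1, rpow_one]
  have hy_split : y ^ p * y ^ (1 - p) = y := by
    rw [← rpow_add' hy (by norm_num), add_sub_cancel, rpow_one]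
  rw [hx_succ, hy_succ]
  field_simp
  linear_combination (x ^ p - y ^ p) * hy_split

end Real

/-- For `δ ∈ (0,1)` and `θ, θ̃ > 0`, with `f_δ θ = -θ^(δ+1)/(δ(δ+1))` and
`f_δ' θ = -θ^δ/δ`, the Bregman quantity
`Λ_δ(θ | θ̃) = f_δ θ - f_δ θ̃ - f_δ'(θ)(θ - θ̃)` satisfies the identity
`Λ_δ = (1/(δ+1)) [(θ^δ - θ̃^δ)(θ - θ̃) + θ̃^δ (θ - θ̃ - (1/δ) θ̃^(1-δ) (θ^δ - θ̃^δ))]`,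
both summands are nonnegative, and in particular `Λ_δ ≥ 0`. -/
theorem stmt2 (δ : ℝ) (hδ : δ ∈ Set.Ioo (0 : ℝ) 1)
    (f : ℝ → ℝ) (hf : f = fun θ : ℝ => -θ ^ (δ + 1) / (δ * (δ + 1)))
    (f' : ℝ → ℝ) (hf' : f' = fun θ : ℝ => -θ ^ δ / δ)
    (Λ : ℝ → ℝ → ℝ) (hΛ : Λ = fun θ θt => f θ - f θt - f' θ * (θ - θt)) :
    ∀ θ θt : ℝ, 0 < θ → 0 < θt →
      (Λ θ θt = (1 / (δ + 1)) *
          ((θ ^ δ - θt ^ δ) * (θ - θt)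
            + θt ^ δ * (θ - θt - (1 / δ) * θt ^ (1 - δ) * (θ ^ δ - θt ^ δ)))) ∧
      0 ≤ (θ ^ δ - θt ^ δ) * (θ - θt) ∧
      0 ≤ θt ^ δ * (θ - θt - (1 / δ) * θt ^ (1 - δ) * (θ ^ δ - θt ^ δ)) ∧
      0 ≤ Λ θ θt := by
  obtain ⟨hδ0, hδ1⟩ := hδ
  intro θ θt hθ hθt
  subst hf hf' hΛ
  simp only
  have identity := rpow_bregman_eq hδ0.ne' (by linarith) hθ.le hθt.le
  have first := rpow_sub_rpow_mul_sub_nonneg hδ0.le hθ.le hθt.le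
  have second : 0 ≤ θt ^ δ * (θ - θt - 1 / δ * θt ^ (1 - δ) * (θ ^ δ - θt ^ δ)) :=
    mul_nonneg (rpow_nonneg hθt.le δ)
      (sub_nonneg.2 (inv_mul_rpow_mul_rpow_sub_rpow_le hδ0 hδ1.le hθ.le hθt.le))
  refine ⟨identity, first, second, ?_⟩
  rw [identity]
  exact mul_nonneg (by positivity) (add_nonneg first second)
end

section
/- Let δ = 0 and β ∈ (0,2]. For all θ, θ̃ > 0: θ̃^{1-β/2}·(θ^{β/2} - θ̃^{β/2} - (β/2)·θ̃^{β/2}·(log θ - log θ̃)) ≤ θ - θ̃ - θ̃·(log θ - log θ̃) = Λ₀(θ | θ̃). -/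
open Real

lemma exp_key (a t : ℝ) (ha : 0 < a) (ha1 : a ≤ 1) :
    Real.exp (a * t) + (1 - a) * t ≤ Real.exp t := by
  have h1 : Real.exp t = Real.exp (a * t) * Real.exp ((1 - a) * t) := by
    rw [← Real.exp_add]; ring_nf
  have h2 := Real.add_one_le_exp ((1 - a) * t)
  have h3 := Real.add_one_le_exp (a * t)
  have h4 := (Real.exp_pos (a * t)).le
  have hbase := mul_le_mul_of_nonneg_left h2 h4
  have h1a : (0:ℝ) ≤ 1 - a := by linarith
  rcases le_or_gt 0 t with ht | ht
  · have h6 : 1 ≤ Real.exp (a * t) := Real.one_le_exp (by positivity)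
    nlinarith [mul_nonneg (mul_nonneg h1a ht) (sub_nonneg.mpr h6)]
  · have h6 : Real.exp (a * t) ≤ 1 :=
      Real.exp_le_one_iff.mpr (by nlinarith)
    nlinarith [mul_nonneg (mul_nonneg h1a (neg_nonneg.mpr ht.le))
      (sub_nonneg.mpr h6)]

/-- For `δ = 0` and `β ∈ (0,2]`, for all `θ, θ̃ > 0`:
`θ̃^(1-β/2) (θ^(β/2) - θ̃^(β/2) - (β/2) θ̃^(β/2) (log θ - log θ̃))
  ≤ θ - θ̃ - θ̃ (log θ - log θ̃) = Λ₀(θ | θ̃)`. -/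
theorem stmt4 (β : ℝ) (hβ : β ∈ Set.Ioc (0 : ℝ) 2) :
    ∀ θ θt : ℝ, 0 < θ → 0 < θt →
      θt ^ (1 - β / 2) *
          (θ ^ (β / 2) - θt ^ (β / 2)
            - (β / 2) * θt ^ (β / 2) * (Real.log θ - Real.log θt))
        ≤ θ - θt - θt * (Real.log θ - Real.log θt) := by
  intro θ θt hθ hθt
  obtain ⟨hβ0, hβ2⟩ := hβ
  set a : ℝ := β / 2 with ha_def
  have ha : 0 < a := by positivity
  have ha1 : a ≤ 1 := by simp only [ha_def]; linarith
  set t : ℝ := Real.log θ - Real.log θt with ht_def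
  have hθeq : θ = θt * Real.exp t := by
    rw [ht_def, Real.exp_sub, Real.exp_log hθ, Real.exp_log hθt]
    field_simp
  have hθa : θ ^ a = θt ^ a * Real.exp (a * t) := by
    rw [Real.rpow_def_of_pos hθ, Real.rpow_def_of_pos hθt, ← Real.exp_add]
    congr 1
    rw [ht_def]; ring
  have hprod : θt ^ (1 - a) * θt ^ a = θt := by
    rw [← Real.rpow_add hθt]
    norm_num
  have hfac : θt ^ (1 - a) *
      (θt ^ a * Real.exp (a * t) - θt ^ a - a * θt ^ a * t)
      = θt * (Real.exp (a * t) - 1 - a * t) := by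
    linear_combination (Real.exp (a * t) - 1 - a * t) * hprod
  rw [hθa, hθeq, hfac]
  have hkey := exp_key a t ha ha1
  nlinarith [hθt.le]
end

section
/- Let δ ∈ (0,1) and β ∈ [2δ, 2]. For all θ, θ̃ > 0: θ̃^{1-β/2}·(θ^{β/2} - θ̃^{β/2} - (β/(2δ))·θ̃^{β/2-δ}·(θ^δ - θ̃^δ)) ≤ θ - θ̃ - (1/δ)·θ̃^{1-δ}·(θ^δ - θ̃^δ). -/
/-!
Both sides are homogeneous of degree one in `(θ, θ̃)`, so it suffices to take `θ̃ = 1`, `θ = x`,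
and `s = β / 2 ∈ [δ, 1]`. The function `g t = x ^ t - (t / δ) (x ^ δ - 1)` is convex in `t` and
takes the value `1` at both `t = 0` and `t = δ`; hence it is nondecreasing on `[δ, ∞)`, and
`g s ≤ g 1` is the claim.
-/

open Real Set

theorem ConvexOn.le_right_of_left_le_of_mem_Icc {𝕜 : Type*} [Field 𝕜] [LinearOrder 𝕜]
    [IsStrictOrderedRing 𝕜] {s : Set 𝕜} {f : 𝕜 → 𝕜} {a b c d : 𝕜}
    (hf : ConvexOn 𝕜 s f) (ha : a ∈ s) (hd : d ∈ s) (hab : a < b) (hc : c ∈ Icc b d)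
    (h : f a ≤ f b) : f c ≤ f d := by
  have hb : b ∈ s := hf.1.ordConnected.out ha hd ⟨hab.le, hc.1.trans hc.2⟩
  calc f c ≤ max (f b) (f d) := hf.le_max_of_mem_Icc hb hd hc
    _ = f d := max_eq_right (hf.le_right_of_left_le'' ha hd hab (hc.1.trans hc.2) h)

theorem rpow_sub_one_sub_div_mul_le_of_mem_Icc {x δ s : ℝ} (hx : 0 < x) (hδ : 0 < δ)
    (hs : s ∈ Icc δ 1) :
    x ^ s - 1 - s / δ * (x ^ δ - 1) ≤ x - 1 - 1 / δ * (x ^ δ - 1) := by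
  set g : ℝ → ℝ := fun t ↦ x ^ t - t / δ * (x ^ δ - 1)
  have hg : ConvexOn ℝ univ g := by
    refine ((convexOn_rpow_left hx).add
      ((LinearMap.mul ℝ ℝ (-((x ^ δ - 1) / δ))).convexOn convex_univ)).congr fun t _ ↦ ?_
    simp only [g, Pi.add_apply, LinearMap.mul_apply']
    ring
  have hg0 : g 0 ≤ g δ := by simp [g, hδ.ne']
  have hgs := hg.le_right_of_left_le_of_mem_Icc (mem_univ 0) (mem_univ 1) hδ hs hg0
  simp only [g, rpow_one] at hgs
  linarith

theorem rpow_one_sub_mul_eq_mul_div_rpow {θ θt : ℝ} (hθ : 0 < θ) (hθt : 0 < θt) (s δ c : ℝ) :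
    θt ^ (1 - s) * (θ ^ s - θt ^ s - c * θt ^ (s - δ) * (θ ^ δ - θt ^ δ))
      = θt * ((θ / θt) ^ s - 1 - c * ((θ / θt) ^ δ - 1)) := by
  have hpow (p : ℝ) : θ ^ p = (θ / θt) ^ p * θt ^ p := by
    rw [← mul_rpow (div_pos hθ hθt).le hθt.le, div_mul_cancel₀ θ hθt.ne']
  have h₁ : θt ^ (1 - s) * θt ^ s = θt := by
    rw [← rpow_add hθt, sub_add_cancel, rpow_one]
  have h₂ : θt ^ (1 - s) * θt ^ (s - δ) * θt ^ δ = θt := by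
    rw [← rpow_add hθt, ← rpow_add hθt, show 1 - s + (s - δ) + δ = 1 by ring, rpow_one]
  rw [hpow s, hpow δ]
  linear_combination ((θ / θt) ^ s - 1) * h₁ - c * ((θ / θt) ^ δ - 1) * h₂

/-- For `δ ∈ (0,1)` and `β ∈ [2δ, 2]`, for all `θ, θ̃ > 0`:
`θ̃^(1-β/2) (θ^(β/2) - θ̃^(β/2) - (β/(2δ)) θ̃^(β/2-δ) (θ^δ - θ̃^δ))
  ≤ θ - θ̃ - (1/δ) θ̃^(1-δ) (θ^δ - θ̃^δ)`. -/
theorem stmt5 (δ : ℝ) (hδ : δ ∈ Set.Ioo (0 : ℝ) 1)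
    (β : ℝ) (hβ : β ∈ Set.Icc (2 * δ) 2) :
    ∀ θ θt : ℝ, 0 < θ → 0 < θt →
      θt ^ (1 - β / 2) *
          (θ ^ (β / 2) - θt ^ (β / 2)
            - (β / (2 * δ)) * θt ^ (β / 2 - δ) * (θ ^ δ - θt ^ δ))
        ≤ θ - θt - (1 / δ) * θt ^ (1 - δ) * (θ ^ δ - θt ^ δ) := by
  intro θ θt hθ hθt
  have hs : β / 2 ∈ Icc δ 1 := ⟨by linarith [hβ.1], by linarith [hβ.2]⟩
  have hright := rpow_one_sub_mul_eq_mul_div_rpow hθ hθt 1 δ (1 / δ)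
  simp only [sub_self, rpow_zero, one_mul, rpow_one] at hright
  rw [rpow_one_sub_mul_eq_mul_div_rpow hθ hθt, hright, ← div_div]
  exact mul_le_mul_of_nonneg_left
    (rpow_sub_one_sub_div_mul_le_of_mem_Icc (div_pos hθ hθt) hδ.1 hs) hθt.le
end

section
/- Let δ ∈ [0,1) and β ∈ [4δ, 1-δ] (with β ∈ (0,1] when δ = 0), and let θ̃ ≥ θ̲ > 0. Then there exists a constant c > 0 depending only on θ̲ and an upper bound for θ̃ such that for all θ > 0: (θ^{β/2} - θ̃^{β/2})² ≤ c·Λ_δ(θ | θ̃). -/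
open Real

namespace Stmt6Aux

lemma core {δ x θt : ℝ} (hδ0 : 0 ≤ δ) (hδ : δ ≤ 1/2) (hx : 0 < x) (ht : 0 < θt) :
    θt ^ δ ≤ x ^ (δ - 1) * (Real.sqrt x * (Real.sqrt x + Real.sqrt θt)) := by
  have hsx : 0 < Real.sqrt x := Real.sqrt_pos.mpr hx
  have hst : 0 < Real.sqrt θt := Real.sqrt_pos.mpr ht
  have hxx : Real.sqrt x * Real.sqrt x = x := Real.mul_self_sqrt hx.le
  have e1 : x ^ (δ - 1) * x = x ^ δ := by
    rw [← Real.rpow_add_one hx.ne' (δ - 1)]; ring_nf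
  have e2 : x ^ (δ - 1) * Real.sqrt x = x ^ (δ - 1/2) := by
    rw [Real.sqrt_eq_rpow, ← Real.rpow_add hx]; ring_nf
  have h1 : x ^ (δ - 1) * (Real.sqrt x * (Real.sqrt x + Real.sqrt θt))
      = x ^ δ + x ^ (δ - 1/2) * Real.sqrt θt := by
    have h' : Real.sqrt x * (Real.sqrt x + Real.sqrt θt) = x + Real.sqrt x * Real.sqrt θt := by
      rw [mul_add, hxx]
    rw [h', mul_add, e1, ← mul_assoc, e2]
  rcases le_total θt x with h | h
  · have h2 : θt ^ δ ≤ x ^ δ := Real.rpow_le_rpow ht.le h hδ0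
    have h3 : 0 ≤ x ^ (δ - 1/2) * Real.sqrt θt := by positivity
    rw [h1]; linarith
  · have e3 : θt ^ (δ - 1/2) * Real.sqrt θt = θt ^ δ := by
      rw [Real.sqrt_eq_rpow, ← Real.rpow_add ht]; ring_nf
    have h2 : θt ^ (δ - 1/2) ≤ x ^ (δ - 1/2) :=
      Real.rpow_le_rpow_of_nonpos hx h (by linarith)
    have h4 : 0 ≤ x ^ δ := (Real.rpow_pos_of_pos hx δ).le
    rw [h1]
    nlinarith

lemma signD {δ θt x : ℝ} (hδ0 : 0 ≤ δ) (hδ : δ ≤ 1/2) (ht : 0 < θt) (hx : 0 < x) :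
    x ^ (δ - 1) * (x - θt) - θt ^ δ * ((Real.sqrt x - Real.sqrt θt) / Real.sqrt x)
      = (x - θt) *
        (x ^ (δ - 1) - θt ^ δ / (Real.sqrt x * (Real.sqrt x + Real.sqrt θt))) ∧
    0 ≤ x ^ (δ - 1) - θt ^ δ / (Real.sqrt x * (Real.sqrt x + Real.sqrt θt)) := by
  have hsx : 0 < Real.sqrt x := Real.sqrt_pos.mpr hx
  have hst : 0 < Real.sqrt θt := Real.sqrt_pos.mpr ht
  have hxx : Real.sqrt x * Real.sqrt x = x := Real.mul_self_sqrt hx.le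
  have htt : Real.sqrt θt * Real.sqrt θt = θt := Real.mul_self_sqrt ht.le
  constructor
  · have hratio : (Real.sqrt x - Real.sqrt θt) / Real.sqrt x
        = (x - θt) / (Real.sqrt x * (Real.sqrt x + Real.sqrt θt)) := by
      rw [div_eq_div_iff hsx.ne' (by positivity)]
      nlinarith
    rw [hratio]; ring
  · rw [sub_nonneg, div_le_iff₀ (by positivity)]
    exact core hδ0 hδ hx ht

lemma engine {θt : ℝ} (ht : 0 < θt) (G G' : ℝ → ℝ)
    (hd : ∀ x, 0 < x → HasDerivAt G (G' x) x)
    (hpos : ∀ x, θt ≤ x → 0 ≤ G' x)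
    (hneg : ∀ x, 0 < x → x ≤ θt → G' x ≤ 0)
    (hG : G θt = 0) : ∀ θ, 0 < θ → 0 ≤ G θ := by
  intro θ hθ
  rcases le_total θt θ with h | h
  · have mono : MonotoneOn G (Set.Ici θt) := by
      apply monotoneOn_of_deriv_nonneg (convex_Ici θt)
      · intro x hx
        exact (hd x (lt_of_lt_of_le ht hx)).continuousAt.continuousWithinAt
      · intro x hx
        rw [interior_Ici] at hx
        exact (hd x (ht.trans hx)).differentiableAt.differentiableWithinAt
      · intro x hx
        rw [interior_Ici] at hx
        rw [(hd x (ht.trans hx)).deriv]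
        exact hpos x hx.le
    have h2 := mono Set.self_mem_Ici (Set.mem_Ici.mpr h) h
    linarith
  · have anti : AntitoneOn G (Set.Icc θ θt) := by
      apply antitoneOn_of_deriv_nonpos (convex_Icc θ θt)
      · intro x hx
        exact (hd x (lt_of_lt_of_le hθ hx.1)).continuousAt.continuousWithinAt
      · intro x hx
        rw [interior_Icc] at hx
        exact (hd x (hθ.trans hx.1)).differentiableAt.differentiableWithinAt
      · intro x hx
        rw [interior_Icc] at hx
        rw [(hd x (hθ.trans hx.1)).deriv]
        exact hneg x (hθ.trans hx.1) hx.2.le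
    have h2 := anti (Set.left_mem_Icc.mpr h) (Set.right_mem_Icc.mpr h) h
    linarith

lemma keyPos {δ θt θ : ℝ} (hδ0 : 0 < δ) (hδ : δ ≤ 1/2) (ht : 0 < θt) (hθ : 0 < θ) :
    δ * (δ + 1) * (θt ^ δ * (Real.sqrt θ - Real.sqrt θt) ^ 2)
      ≤ δ * θ ^ (δ + 1) + θt ^ (δ + 1) - ((δ + 1) * θt) * θ ^ δ := by
  set G : ℝ → ℝ := fun x =>
    δ * x ^ (δ + 1) + θt ^ (δ + 1) - ((δ + 1) * θt) * x ^ δ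
      - (δ * (δ + 1) * θt ^ δ) * (Real.sqrt x - Real.sqrt θt) ^ 2 with hGdef
  set G' : ℝ → ℝ := fun x =>
    (δ * (δ + 1)) * (x ^ (δ - 1) * (x - θt)
      - θt ^ δ * ((Real.sqrt x - Real.sqrt θt) / Real.sqrt x)) with hG'def
  have hd : ∀ x, 0 < x → HasDerivAt G (G' x) x := by
    intro x hx
    have hsx : 0 < Real.sqrt x := Real.sqrt_pos.mpr hx
    have h1 : HasDerivAt (fun y : ℝ => y ^ (δ + 1)) ((δ + 1) * x ^ δ) x := by
      have := Real.hasDerivAt_rpow_const (p := δ + 1) (Or.inl hx.ne')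
      simpa using this
    have h2 : HasDerivAt (fun y : ℝ => y ^ δ) (δ * x ^ (δ - 1)) x :=
      Real.hasDerivAt_rpow_const (p := δ) (Or.inl hx.ne')
    have h3 : HasDerivAt (fun y : ℝ => (Real.sqrt y - Real.sqrt θt) ^ 2)
        ((2 : ℕ) * (Real.sqrt x - Real.sqrt θt) ^ 1 * (1 / (2 * Real.sqrt x))) x :=
      ((Real.hasDerivAt_sqrt hx.ne').sub_const _).pow 2
    have hD : HasDerivAt G
        (δ * ((δ + 1) * x ^ δ) - ((δ + 1) * θt) * (δ * x ^ (δ - 1))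
          - (δ * (δ + 1) * θt ^ δ) *
            ((2 : ℕ) * (Real.sqrt x - Real.sqrt θt) ^ 1 * (1 / (2 * Real.sqrt x)))) x := by
      exact (((h1.const_mul δ).add_const (θt ^ (δ + 1))).sub
        (h2.const_mul ((δ + 1) * θt))).sub (h3.const_mul (δ * (δ + 1) * θt ^ δ))
    convert hD using 1
    have e1 : x ^ δ = x ^ (δ - 1) * x := by
      rw [← Real.rpow_add_one hx.ne']; ring_nf
    rw [hG'def]
    simp only []
    rw [e1]
    field_simp
    ring
  have hpos : ∀ x, θt ≤ x → 0 ≤ G' x := by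
    intro x hxt
    have hx : 0 < x := lt_of_lt_of_le ht hxt
    obtain ⟨heq, hfac⟩ := signD hδ0.le hδ ht hx
    rw [hG'def]
    simp only []
    rw [heq]
    exact mul_nonneg (by nlinarith) (mul_nonneg (by linarith) hfac)
  have hneg : ∀ x, 0 < x → x ≤ θt → G' x ≤ 0 := by
    intro x hx hxt
    obtain ⟨heq, hfac⟩ := signD hδ0.le hδ ht hx
    rw [hG'def]
    simp only []
    rw [heq]
    exact mul_nonpos_of_nonneg_of_nonpos (by nlinarith)
      (mul_nonpos_of_nonpos_of_nonneg (by linarith) hfac)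
  have hG : G θt = 0 := by
    rw [hGdef]
    simp only [sub_self]
    have : θt ^ (δ + 1) = θt ^ δ * θt := Real.rpow_add_one ht.ne' δ
    rw [this]
    ring
  have := engine ht G G' hd hpos hneg hG θ hθ
  rw [hGdef] at this
  simp only [] at this
  linarith

lemma keyZero {θt θ : ℝ} (ht : 0 < θt) (hθ : 0 < θ) :
    (Real.sqrt θ - Real.sqrt θt) ^ 2 ≤ θ - θt + θt * (Real.log θt - Real.log θ) := by
  set G : ℝ → ℝ := fun x =>
    x - θt + θt * (Real.log θt - Real.log x) - (Real.sqrt x - Real.sqrt θt) ^ 2 with hGdef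
  set G' : ℝ → ℝ := fun x =>
    x ^ ((0:ℝ) - 1) * (x - θt) - θt ^ (0:ℝ) * ((Real.sqrt x - Real.sqrt θt) / Real.sqrt x)
    with hG'def
  have hd : ∀ x, 0 < x → HasDerivAt G (G' x) x := by
    intro x hx
    have hsx : 0 < Real.sqrt x := Real.sqrt_pos.mpr hx
    have h3 : HasDerivAt (fun y : ℝ => (Real.sqrt y - Real.sqrt θt) ^ 2)
        ((2 : ℕ) * (Real.sqrt x - Real.sqrt θt) ^ 1 * (1 / (2 * Real.sqrt x))) x :=
      ((Real.hasDerivAt_sqrt hx.ne').sub_const _).pow 2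
    have hlog : HasDerivAt (fun y : ℝ => θt * (Real.log θt - Real.log y)) (θt * -x⁻¹) x :=
      ((Real.hasDerivAt_log hx.ne').const_sub (Real.log θt)).const_mul θt
    have hD : HasDerivAt G (1 + θt * -x⁻¹
        - (2 : ℕ) * (Real.sqrt x - Real.sqrt θt) ^ 1 * (1 / (2 * Real.sqrt x))) x :=
      (((hasDerivAt_id x).sub_const θt).add hlog).sub h3
    convert hD using 1
    rw [hG'def]
    simp only [Real.rpow_zero]
    have e1 : x ^ ((0:ℝ) - 1) = x⁻¹ := by
      rw [show (0:ℝ) - 1 = (-1 : ℝ) by norm_num, Real.rpow_neg_one]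
    rw [e1]
    field_simp
    ring
  have hpos : ∀ x, θt ≤ x → 0 ≤ G' x := by
    intro x hxt
    have hx : 0 < x := lt_of_lt_of_le ht hxt
    obtain ⟨heq, hfac⟩ := signD (le_refl (0:ℝ)) (by norm_num) ht hx
    rw [hG'def]; simp only []
    rw [heq]
    exact mul_nonneg (by linarith) hfac
  have hneg : ∀ x, 0 < x → x ≤ θt → G' x ≤ 0 := by
    intro x hx hxt
    obtain ⟨heq, hfac⟩ := signD (le_refl (0:ℝ)) (by norm_num) ht hx
    rw [hG'def]; simp only []
    rw [heq]
    exact mul_nonpos_of_nonpos_of_nonneg (by linarith) hfac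
  have hG : G θt = 0 := by rw [hGdef]; simp
  have := engine ht G G' hd hpos hneg hG θ hθ
  rw [hGdef] at this
  simp only [] at this
  linarith

lemma powB {β a b : ℝ} (hβ0 : 0 < β) (hβ1 : β ≤ 1) (ha : 0 < a) (hb : 0 < b) :
    |a ^ β - b ^ β| ≤ b ^ (β - 1) * |a - b| := by
  have h3 : b ^ β = b ^ (β - 1) * b := by
    rw [← Real.rpow_add_one hb.ne']; ring_nf
  have hbb : 0 < b ^ β := Real.rpow_pos_of_pos hb β
  rcases le_total b a with h | h
  · rw [abs_of_nonneg (sub_nonneg.mpr (Real.rpow_le_rpow hb.le h hβ0.le)),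
      abs_of_nonneg (sub_nonneg.mpr h)]
    have hs : 1 ≤ a / b := (one_le_div hb).mpr h
    have h1 : (a / b) ^ β ≤ a / b := by
      calc (a / b) ^ β ≤ (a / b) ^ (1 : ℝ) := Real.rpow_le_rpow_of_exponent_le hs hβ1
        _ = a / b := Real.rpow_one _
    have h2 : a ^ β = b ^ β * (a / b) ^ β := by
      rw [← Real.mul_rpow hb.le (by positivity), mul_div_cancel₀ _ hb.ne']
    calc a ^ β - b ^ β = b ^ β * ((a / b) ^ β - 1) := by rw [h2]; ring
      _ ≤ b ^ β * (a / b - 1) := by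
          apply mul_le_mul_of_nonneg_left (by linarith) hbb.le
      _ = b ^ (β - 1) * (a - b) := by rw [h3]; field_simp
  · rw [abs_of_nonpos (sub_nonpos.mpr (Real.rpow_le_rpow ha.le h hβ0.le)),
      abs_of_nonpos (sub_nonpos.mpr h)]
    have hs1 : a / b ≤ 1 := (div_le_one hb).mpr h
    have hs0 : 0 < a / b := by positivity
    have h1 : a / b ≤ (a / b) ^ β := by
      calc a / b = (a / b) ^ (1 : ℝ) := (Real.rpow_one _).symm
        _ ≤ (a / b) ^ β := Real.rpow_le_rpow_of_exponent_ge hs0 hs1 hβ1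
    have h2 : a ^ β = b ^ β * (a / b) ^ β := by
      rw [← Real.mul_rpow hb.le (by positivity), mul_div_cancel₀ _ hb.ne']
    calc -(a ^ β - b ^ β) = b ^ β * (1 - (a / b) ^ β) := by rw [h2]; ring
      _ ≤ b ^ β * (1 - a / b) := by
          apply mul_le_mul_of_nonneg_left (by linarith) hbb.le
      _ = b ^ (β - 1) * -(a - b) := by rw [h3]; field_simp; ring

end Stmt6Aux

/-- Let `δ ∈ [0,1)` and `β ∈ [4δ, 1-δ]` with `β > 0`, and let
`0 < θ̲ ≤ θ̃ ≤ Θ`. Then there is a constant `c > 0` depending only on `θ̲` and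
the upper bound `Θ` such that for all `θ > 0`:
`(θ^(β/2) - θ̃^(β/2))² ≤ c Λ_δ(θ | θ̃)`. -/
theorem stmt6 (δ : ℝ) (hδ : δ ∈ Set.Ico (0 : ℝ) 1)
    (β : ℝ) (hβ : β ∈ Set.Icc (4 * δ) (1 - δ)) (hβ0 : 0 < β)
    (f : ℝ → ℝ)
    (hf : f = fun θ : ℝ =>
      if δ = 0 then -θ * (Real.log θ - 1) else -θ ^ (δ + 1) / (δ * (δ + 1)))
    (f' : ℝ → ℝ)
    (hf' : f' = fun θ : ℝ => if δ = 0 then -Real.log θ else -θ ^ δ / δ)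
    (Λ : ℝ → ℝ → ℝ) (hΛ : Λ = fun θ θt => f θ - f θt - f' θ * (θ - θt))
    (θlow Θ : ℝ) (hlow : 0 < θlow) :
    ∃ c : ℝ, 0 < c ∧
      ∀ θt : ℝ, θlow ≤ θt → θt ≤ Θ →
        ∀ θ : ℝ, 0 < θ →
          (θ ^ (β / 2) - θt ^ (β / 2)) ^ 2 ≤ c * Λ θ θt := by
  obtain ⟨hδ0, hδ1⟩ := hδ
  obtain ⟨h4δ, hβδ⟩ := hβ
  have hδhalf : δ ≤ 1/2 := by linarith
  have hβ1 : β ≤ 1 := by linarith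
  refine ⟨max 1 ((1/θlow)^2), lt_of_lt_of_le one_pos (le_max_left _ _), ?_⟩
  intro θt hθt1 _hθt2 θ hθ
  have ht : 0 < θt := lt_of_lt_of_le hlow hθt1
  -- Step 1: θt^δ * (√θ - √θt)^2 ≤ Λ θ θt
  have hkey : θt ^ δ * (Real.sqrt θ - Real.sqrt θt) ^ 2 ≤ Λ θ θt := by
    rcases eq_or_lt_of_le hδ0 with h0 | h0
    · -- δ = 0
      have hδe : δ = 0 := h0.symm
      rw [hΛ, hf, hf']
      simp only [hδe, if_true, ite_true, Real.rpow_zero, one_mul]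
      have hz := Stmt6Aux.keyZero ht hθ
      nlinarith [hz]
    · -- 0 < δ
      have hδne : δ ≠ 0 := h0.ne'
      rw [hΛ, hf, hf']
      simp only [if_neg hδne]
      have e : θ ^ (δ + 1) = θ ^ δ * θ := Real.rpow_add_one hθ.ne' δ
      have h2 : -θ ^ (δ + 1) / (δ * (δ + 1)) - -θt ^ (δ + 1) / (δ * (δ + 1))
          - -θ ^ δ / δ * (θ - θt)
          = (δ * θ ^ (δ + 1) + θt ^ (δ + 1) - ((δ + 1) * θt) * θ ^ δ) / (δ * (δ + 1)) := by
        rw [e]; field_simp; ring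
      rw [h2, le_div_iff₀ (by positivity)]
      nlinarith [Stmt6Aux.keyPos h0 hδhalf ht hθ]
  have hΛ0 : 0 ≤ Λ θ θt := le_trans (by positivity) hkey
  -- Step 2: (θ^(β/2) - θt^(β/2))^2 ≤ θt^(β-1) * (√θ - √θt)^2
  have hA : θ ^ (β / 2) = Real.sqrt θ ^ β := by
    rw [Real.sqrt_eq_rpow, ← Real.rpow_mul hθ.le]
    congr 1; ring
  have hB : θt ^ (β / 2) = Real.sqrt θt ^ β := by
    rw [Real.sqrt_eq_rpow, ← Real.rpow_mul ht.le]
    congr 1; ring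
  have habs := Stmt6Aux.powB hβ0 hβ1 (Real.sqrt_pos.mpr hθ) (Real.sqrt_pos.mpr ht)
  have h1 : (θ ^ (β / 2) - θt ^ (β / 2)) ^ 2
      ≤ (Real.sqrt θt ^ (β - 1)) ^ 2 * (Real.sqrt θ - Real.sqrt θt) ^ 2 := by
    rw [hA, hB]
    calc (Real.sqrt θ ^ β - Real.sqrt θt ^ β) ^ 2
        = |Real.sqrt θ ^ β - Real.sqrt θt ^ β| ^ 2 := (sq_abs _).symm
      _ ≤ (Real.sqrt θt ^ (β - 1) * |Real.sqrt θ - Real.sqrt θt|) ^ 2 :=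
          pow_le_pow_left₀ (abs_nonneg _) habs 2
      _ = (Real.sqrt θt ^ (β - 1)) ^ 2 * (Real.sqrt θ - Real.sqrt θt) ^ 2 := by
          rw [mul_pow, sq_abs]
  have h2 : (Real.sqrt θt ^ (β - 1)) ^ 2 = θt ^ (β - 1) := by
    rw [Real.sqrt_eq_rpow, ← Real.rpow_mul ht.le,
      ← Real.rpow_natCast (θt ^ (1 / 2 * (β - 1))) 2, ← Real.rpow_mul ht.le]
    congr 1
    push_cast
    ring
  -- Step 3: θt^(β-1-δ) is bounded by the constant
  have h3 : θt ^ (β - 1) = θt ^ (β - 1 - δ) * θt ^ δ := by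
    rw [← Real.rpow_add ht]; ring_nf
  have h4 : θt ^ (β - 1 - δ) ≤ max 1 ((1/θlow)^2) := by
    rcases le_total 1 θt with h | h
    · exact le_trans (Real.rpow_le_one_of_one_le_of_nonpos h (by linarith)) (le_max_left _ _)
    · have h5 : θt ^ (β - 1 - δ) ≤ θt ^ (-2 : ℝ) :=
        Real.rpow_le_rpow_of_exponent_ge ht h (by linarith)
      have h6 : θt ^ (-2 : ℝ) = (1/θt) ^ 2 := by
        rw [Real.rpow_neg ht.le, Real.rpow_two, one_div, inv_pow]
      have h7 : (1/θt) ^ 2 ≤ (1/θlow) ^ 2 := by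
        apply pow_le_pow_left₀ (by positivity)
        exact one_div_le_one_div_of_le hlow hθt1
      calc θt ^ (β - 1 - δ) ≤ θt ^ (-2 : ℝ) := h5
        _ = (1/θt) ^ 2 := h6
        _ ≤ (1/θlow) ^ 2 := h7
        _ ≤ max 1 ((1/θlow)^2) := le_max_right _ _
  calc (θ ^ (β / 2) - θt ^ (β / 2)) ^ 2
      ≤ θt ^ (β - 1) * (Real.sqrt θ - Real.sqrt θt) ^ 2 := by rw [← h2]; exact h1
    _ = θt ^ (β - 1 - δ) * (θt ^ δ * (Real.sqrt θ - Real.sqrt θt) ^ 2) := by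
        rw [h3]; ring
    _ ≤ θt ^ (β - 1 - δ) * Λ θ θt :=
        mul_le_mul_of_nonneg_left hkey (Real.rpow_pos_of_pos ht _).le
    _ ≤ max 1 ((1/θlow)^2) * Λ θ θt := mul_le_mul_of_nonneg_right h4 hΛ0
end

section
/- Let ψ : ℝ₊ → [0,∞] be defined by ψ(r) = (1/4)(r²(2 log r - 1) + 1) for r ≥ 1 and ψ(r) = +∞ for r < 1. Then for every s ≥ 0, the convex conjugate satisfies ψ*(s) ≤ s²/log(s+1) + s²/log²(s+1) - 1/4, where ψ*(s) = sup_{r ≥ 1}(sr - ψ(r)). -/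
open Real Set

/-- Let `ψ(r) = (1/4)(r²(2 log r - 1) + 1)` on `[1,∞)` (and `+∞` below `1`, so that
the conjugate supremum ranges over `r ≥ 1`). Then for every `s > 0` the convex
conjugate `ψ*(s) = sup_{r ≥ 1} (s r - ψ(r))` satisfies
`ψ*(s) ≤ s²/log(s+1) + s²/log²(s+1) - 1/4`. -/
theorem stmt10 (ψ : ℝ → ℝ)
    (hψ : ψ = fun r => (1 / 4) * (r ^ 2 * (2 * Real.log r - 1) + 1))
    (ψstar : ℝ → ℝ)
    (hψstar : ψstar = fun s => sSup ((fun r => s * r - ψ r) '' Set.Ici 1)) :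
    ∀ s : ℝ, 0 < s →
      ψstar s ≤ s ^ 2 / Real.log (s + 1) + s ^ 2 / (Real.log (s + 1)) ^ 2 - 1 / 4 := by
  intro s hs
  subst hψ hψstar
  set t : ℝ := Real.log (s + 1) / 2 with htdef
  have hs1 : (1:ℝ) < s + 1 := by linarith
  have ht : 0 < t := by
    have := Real.log_pos hs1
    rw [htdef]; linarith
  set E : ℝ := Real.exp t with hEdef
  have hE0 : 0 < E := Real.exp_pos t
  have hE2 : E ^ 2 = s + 1 := by
    rw [hEdef, sq, ← Real.exp_add]
    have h2t : t + t = Real.log (s + 1) := by rw [htdef]; ring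
    rw [h2t, Real.exp_log (by linarith : (0:ℝ) < s + 1)]
  have key1 : 2 * t * E < s := by
    have h1 : t < Real.sinh t := Real.self_lt_sinh_iff.mpr ht
    have h2 : Real.sinh t = (E - E⁻¹) / 2 := by
      rw [Real.sinh_eq, hEdef, Real.exp_neg]
    have h3 : E * E⁻¹ = 1 := mul_inv_cancel₀ hE0.ne'
    nlinarith [h1, hE0, hE2]
  have hL : Real.log (s + 1) = 2 * t := by rw [htdef]; ring
  clear_value t E
  apply csSup_le
  · exact ⟨s * 1 - (1 / 4) * (1 ^ 2 * (2 * Real.log 1 - 1) + 1),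
      Set.mem_image_of_mem _ Set.self_mem_Ici⟩
  · rintro x ⟨r, hr1, rfl⟩
    simp only [Set.mem_Ici] at hr1
    have hr0 : (0:ℝ) < r := by linarith
    set u : ℝ := Real.log r with hudef
    have hu0 : 0 ≤ u := Real.log_nonneg hr1
    have hru : r = Real.exp u := (Real.exp_log hr0).symm
    clear_value u
    -- main polynomial inequality
    have P : 0 ≤ (2*t+1) * s^2 - 4*t^2 * s * r + t^2 * r^2 * (2*u - 1) := by
      rcases le_or_gt (4*t^2) ((2*t+1) * (2*u-1)) with hA | hB
      · nlinarith [sq_nonneg ((2*t+1)*s - 2*t^2*r), sq_nonneg (t*r), ht,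
          mul_nonneg (sq_nonneg (t*r)) (sub_nonneg.mpr hA)]
      · have h42 : (0:ℝ) < 4*t + 2 := by linarith
        have hu_le : u ≤ t + 1/(4*t+2) := by
          rw [← sub_le_iff_le_add', le_div_iff₀ h42]
          nlinarith [hB]
        have h41 : (0:ℝ) < 4*t + 1 := by linarith
        have hp : 0 < Real.exp (1/(4*t+2)) := Real.exp_pos _
        have hkey : Real.exp (1/(4*t+2)) * (1 - 1/(4*t+2)) ≤ 1 := by
          calc Real.exp (1/(4*t+2)) * (1 - 1/(4*t+2))
              ≤ Real.exp (1/(4*t+2)) * Real.exp (-(1/(4*t+2))) := by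
                apply mul_le_mul_of_nonneg_left _ hp.le
                linarith [Real.add_one_le_exp (-(1/(4*t+2)))]
            _ = 1 := by rw [← Real.exp_add]; simp
        have hEδ : Real.exp (1/(4*t+2)) * (4*t+1) ≤ 4*t+2 := by
          have h2 := mul_le_mul_of_nonneg_right hkey h42.le
          calc Real.exp (1/(4*t+2)) * (4*t+1)
              = Real.exp (1/(4*t+2)) * (1 - 1/(4*t+2)) * (4*t+2) := by
                field_simp; ring
            _ ≤ 1 * (4*t+2) := h2
            _ = 4*t+2 := one_mul _
        have h1 : r ≤ E * Real.exp (1/(4*t+2)) := by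
          rw [hru, hEdef, ← Real.exp_add]
          exact Real.exp_le_exp.mpr hu_le
        have hre' : r * (4*t+1) ≤ E * (4*t+2) := by
          calc r * (4*t+1) ≤ (E * Real.exp (1/(4*t+2))) * (4*t+1) :=
                mul_le_mul_of_nonneg_right h1 h41.le
            _ = E * (Real.exp (1/(4*t+2)) * (4*t+1)) := by ring
            _ ≤ E * (4*t+2) := mul_le_mul_of_nonneg_left hEδ hE0.le
        have hs' : t * r * (4*t+1) < s * (2*t+1) := by
          have h2 : t * (r * (4*t+1)) ≤ t * (E * (4*t+2)) :=
            mul_le_mul_of_nonneg_left hre' ht.le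
          nlinarith [key1, h2, ht]
        have hstr : t * r < s := by nlinarith [hs', ht, hr0, mul_pos ht hr0]
        nlinarith [mul_pos hs (sub_pos.mpr hs'),
          mul_nonneg (mul_pos ht hr0).le (sub_pos.mpr hstr).le,
          mul_nonneg (mul_nonneg (mul_nonneg ht.le ht.le) (mul_nonneg hr0.le hr0.le)) hu0]
    -- conclude
    rw [hL]
    have ht2 : (0:ℝ) < 4 * t ^ 2 := by positivity
    have expand : s^2/(2*t) + s^2/(2*t)^2 - 1/4 - (s*r - (1/4)*(r^2*(2*u-1)+1))
        = ((2*t+1) * s^2 - 4*t^2 * s * r + t^2 * r^2 * (2*u - 1)) / (4*t^2) := by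
      field_simp
      ring
    have hnn : 0 ≤ s^2/(2*t) + s^2/(2*t)^2 - 1/4 - (s*r - (1/4)*(r^2*(2*u-1)+1)) := by
      rw [expand]; exact div_nonneg P ht2.le
    simp only [hudef] at hnn ⊢
    linarith
end

section
/- Let (Ω,μ) be a finite measure space, a, b : Ω → ℝ measurable with b > 0 a.e., and suppose ∫ a²/b dμ ≤ C and ∫ b·log b dμ ≤ C. Then there exists a constant c depending only on C and μ(Ω) such that ∫ |a|·log^{1/2}(1 + |a|) dμ ≤ c. -/
/-!
Pointwise, Young's inequality gives `|a| √log(1+|a|) ≤ a²/b + b log(1+|a|)/4`. Where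
`|a| ≤ b²` the last term is controlled by `b log b`, since `log(1+|a|) ≤ 2 log(1+b)`; where
`|a| > b²` one has `b log(1+|a|) ≤ 2b√|a| ≤ 2|a| ≤ a²/b + b`. Altogether
`|a| √log(1+|a|) ≤ 2 a²/b + b log b + 1`, and integrating over a space of mass at most `M`
gives the constant `3C + max M 0`.
-/

open Real MeasureTheory

lemma sub_one_le_mul_log {x : ℝ} (hx : 0 < x) : x - 1 ≤ x * log x := by
  have h := mul_le_mul_of_nonneg_left (one_sub_inv_le_log_of_pos hx) hx.le
  rwa [mul_sub, mul_one, mul_inv_cancel₀ hx.ne'] at h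

lemma mul_log_one_add_le {x : ℝ} (hx : 0 < x) : x * log (1 + x) ≤ x * log x + 1 := by
  have hsplit : log (1 + x) = log x + log (1 + x⁻¹) := by
    rw [← log_mul hx.ne' (by positivity), mul_add, mul_one, mul_inv_cancel₀ hx.ne', add_comm]
  have hinv : log (1 + x⁻¹) ≤ x⁻¹ := by
    linarith [log_le_sub_one_of_pos (by positivity : 0 < 1 + x⁻¹)]
  calc x * log (1 + x) = x * log x + x * log (1 + x⁻¹) := by rw [hsplit, mul_add]
    _ ≤ x * log x + x * x⁻¹ := by gcongr
    _ = x * log x + 1 := by rw [mul_inv_cancel₀ hx.ne']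

lemma log_one_add_le_two_sqrt {t : ℝ} (ht : 0 ≤ t) : log (1 + t) ≤ 2 * √t := by
  have hs := sqrt_nonneg t
  calc log (1 + t) ≤ log ((1 + √t) ^ 2) :=
        log_le_log (by positivity) (by nlinarith [sq_sqrt ht])
    _ = 2 * log (1 + √t) := by rw [log_pow]; norm_num
    _ ≤ 2 * √t := by linarith [log_le_sub_one_of_pos (by positivity : 0 < 1 + √t)]

lemma mul_le_sq_div_add_mul_sq_div_four {b : ℝ} (hb : 0 < b) (x y : ℝ) :
    x * y ≤ x ^ 2 / b + b * y ^ 2 / 4 := by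
  rw [div_add_div _ _ hb.ne' four_ne_zero, le_div_iff₀ (by positivity)]
  nlinarith [sq_nonneg (2 * x - b * y)]

lemma mul_log_one_add_le_sq_div_add {b t : ℝ} (hb : 0 < b) (ht : 0 ≤ t) :
    b * log (1 + t) ≤ t ^ 2 / b + 3 * (b * log b) + 3 := by
  have hmass := sub_one_le_mul_log hb
  have hsq : 0 ≤ t ^ 2 / b := by positivity
  rcases le_or_gt t (b ^ 2) with hsmall | hlarge
  · have hlog : log (1 + t) ≤ 2 * log (1 + b) :=
      calc log (1 + t) ≤ log ((1 + b) ^ 2) := log_le_log (by positivity) (by nlinarith)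
        _ = 2 * log (1 + b) := by rw [log_pow]; norm_num
    nlinarith [mul_log_one_add_le hb]
  · have hbt : b ≤ √t := le_sqrt_of_sq_le hlarge.le
    calc b * log (1 + t) ≤ b * (2 * √t) := by gcongr; exact log_one_add_le_two_sqrt ht
      _ ≤ 2 * t := by nlinarith [sq_sqrt ht]
      _ ≤ t ^ 2 / b + b := by
        rw [div_add' _ _ _ hb.ne', le_div_iff₀ hb]
        nlinarith [two_mul_le_add_sq t b]
      _ ≤ t ^ 2 / b + 3 * (b * log b) + 3 := by linarith

lemma abs_mul_sqrt_log_one_add_abs_le {a b : ℝ} (hb : 0 < b) :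
    |a| * √(log (1 + |a|)) ≤ 2 * (a ^ 2 / b) + b * log b + 1 := by
  have hlog : 0 ≤ log (1 + |a|) := log_nonneg (by linarith [abs_nonneg a])
  have hyoung := mul_le_sq_div_add_mul_sq_div_four hb |a| √(log (1 + |a|))
  rw [sq_abs, sq_sqrt hlog] at hyoung
  have hlog_bound := mul_log_one_add_le_sq_div_add hb (abs_nonneg a)
  rw [sq_abs] at hlog_bound
  have hsq : 0 ≤ a ^ 2 / b := by positivity
  linarith [sub_one_le_mul_log hb]

section Integral

variable {Ω : Type*} [MeasurableSpace Ω] {μ : Measure Ω} [IsFiniteMeasure μ] {a b : Ω → ℝ}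

lemma integrable_abs_mul_sqrt_log_one_add_abs (ha : AEMeasurable a μ)
    (hb : ∀ᵐ x ∂μ, 0 < b x) (hsq : Integrable (fun x => a x ^ 2 / b x) μ)
    (hlog : Integrable (fun x => b x * log (b x)) μ) :
    Integrable (fun x => |a x| * √(log (1 + |a x|))) μ := by
  refine Integrable.mono' (((hsq.const_mul 2).add hlog).add (integrable_const 1))
    (by fun_prop : AEMeasurable _ μ).aestronglyMeasurable ?_
  filter_upwards [hb] with x hx
  rw [norm_of_nonneg (by positivity)]
  exact abs_mul_sqrt_log_one_add_abs_le hx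

lemma integral_abs_mul_sqrt_log_one_add_abs_le (hb : ∀ᵐ x ∂μ, 0 < b x)
    (hsq : Integrable (fun x => a x ^ 2 / b x) μ)
    (hlog : Integrable (fun x => b x * log (b x)) μ) :
    ∫ x, |a x| * √(log (1 + |a x|)) ∂μ ≤
      2 * ∫ x, a x ^ 2 / b x ∂μ + ∫ x, b x * log (b x) ∂μ + μ.real Set.univ := by
  have hsum : Integrable (fun x => 2 * (a x ^ 2 / b x) + b x * log (b x)) μ :=
    (hsq.const_mul 2).add hlog
  have hpointwise : ∀ᵐ x ∂μ,
      |a x| * √(log (1 + |a x|)) ≤ 2 * (a x ^ 2 / b x) + b x * log (b x) + 1 := by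
    filter_upwards [hb] with x hx using abs_mul_sqrt_log_one_add_abs_le hx
  calc ∫ x, |a x| * √(log (1 + |a x|)) ∂μ
      ≤ ∫ x, 2 * (a x ^ 2 / b x) + b x * log (b x) + 1 ∂μ :=
        integral_mono_of_nonneg (.of_forall fun x => by positivity)
          (hsum.add (integrable_const 1)) hpointwise
    _ = 2 * ∫ x, a x ^ 2 / b x ∂μ + ∫ x, b x * log (b x) ∂μ + μ.real Set.univ := by
        rw [integral_add hsum (integrable_const 1),
          integral_add (hsq.const_mul 2) hlog, integral_const_mul, integral_const, smul_eq_mul,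
          mul_one]

end Integral

/-- Lemma 2.5 (single-function version): on a finite measure space, if
`∫ a²/b ≤ C` and `∫ b log b ≤ C` (with `b > 0` a.e.), then
`∫ |a| log^{1/2}(1 + |a|)` is finite and bounded by a constant depending only on
`C` and the total mass `μ(Ω) ≤ M`. -/
theorem stmt12 (C M : ℝ) :
    ∃ c : ℝ,
      ∀ (Ω : Type) (_ : MeasurableSpace Ω) (μ : Measure Ω),
        IsFiniteMeasure μ → μ Set.univ ≤ ENNReal.ofReal M →
        ∀ a b : Ω → ℝ, Measurable a → Measurable b →
          (∀ᵐ x ∂μ, 0 < b x) →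
          Integrable (fun x => (a x) ^ 2 / b x) μ →
          Integrable (fun x => b x * Real.log (b x)) μ →
          (∫ x, (a x) ^ 2 / b x ∂μ) ≤ C →
          (∫ x, b x * Real.log (b x) ∂μ) ≤ C →
          Integrable (fun x => |a x| * Real.sqrt (Real.log (1 + |a x|))) μ ∧
          (∫ x, |a x| * Real.sqrt (Real.log (1 + |a x|)) ∂μ) ≤ c := by
  refine ⟨3 * C + max M 0, fun Ω _ μ _ hM a b ha _ hb hsq hlog hsqC hlogC => ?_⟩
  have hmass : μ.real Set.univ ≤ max M 0 := by
    rw [measureReal_def, ← ENNReal.toReal_ofReal']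
    exact ENNReal.toReal_mono ENNReal.ofReal_ne_top hM
  refine ⟨integrable_abs_mul_sqrt_log_one_add_abs ha.aemeasurable hb hsq hlog, ?_⟩
  linarith [integral_abs_mul_sqrt_log_one_add_abs_le hb hsq hlog]
end

section
/- Let δ ∈ [0,1) and let θ, θ̃ > 0 and g ∈ [0, 1/2]. Then (θ/θ̃)·g ≤ (1/θ̃)·(θ - θ̃ - (f_δ''(θ̃))^{-1}(f_δ'(θ) - f_δ'(θ̃))) + 2^{1/(1-δ)}·g. -/
/-!
With `x = θ/θ̃` the claim reads `x g ≤ x - 1 - φ_δ x + C g`, where `φ_δ` is the Box–Cox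
transform (`log` for `δ = 0`, `(x^δ - 1)/δ` otherwise) and `C = 2^(1/(1-δ))`. The function
`φ_δ` is concave with `φ_δ' x = x^(δ-1)`, so it lies below its tangents at `1` and at `C`,
where the slopes are `1` and `1/2`. For `x ≤ C` the first tangent gives `x - 1 - φ_δ x ≥ 0`,
and `x g ≤ C g`; for `x > C` the second one gives the claim because `g ≤ 1/2`.
-/

open Real

noncomputable def boxCox (δ x : ℝ) : ℝ :=
  if δ = 0 then log x else (x ^ δ - 1) / δ

@[simp]
lemma boxCox_one (δ : ℝ) : boxCox δ 1 = 0 := by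
  simp [boxCox]

lemma boxCox_le_add_rpow_mul_sub {δ c x : ℝ} (hδ0 : 0 ≤ δ) (hδ1 : δ ≤ 1) (hc : 0 < c)
    (hx : 0 < x) : boxCox δ x ≤ boxCox δ c + c ^ (δ - 1) * (x - c) := by
  rcases hδ0.eq_or_lt with rfl | hδ
  · have hlog : log (x / c) ≤ x / c - 1 := log_le_sub_one_of_pos (div_pos hx hc)
    rw [log_div hx.ne' hc.ne'] at hlog
    simp only [boxCox, if_pos, zero_sub, rpow_neg_one]
    calc log x ≤ log c + (x / c - 1) := by linarith
      _ = log c + c⁻¹ * (x - c) := by field_simp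
  · have hbern : (x / c) ^ δ ≤ 1 + δ * (x / c - 1) := by
      simpa using rpow_one_add_le_one_add_mul_self (s := x / c - 1)
        (by linarith [div_pos hx hc]) hδ0 hδ1
    have hxδ : x ^ δ ≤ c ^ δ + δ * (c ^ (δ - 1) * (x - c)) := by
      calc x ^ δ = c ^ δ * (x / c) ^ δ := by
            rw [div_rpow hx.le hc.le]; field_simp [(rpow_pos_of_pos hc δ).ne']
        _ ≤ c ^ δ * (1 + δ * (x / c - 1)) := by gcongr
        _ = c ^ δ + δ * (c ^ (δ - 1) * (x - c)) := by
            rw [rpow_sub_one hc.ne']; field_simp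
    simp only [boxCox, if_neg hδ.ne']
    rw [div_add' _ _ _ hδ.ne', div_le_div_iff_of_pos_right hδ]
    linarith

lemma boxCox_le_sub_one {δ x : ℝ} (hδ0 : 0 ≤ δ) (hδ1 : δ ≤ 1) (hx : 0 < x) :
    boxCox δ x ≤ x - 1 := by
  simpa using boxCox_le_add_rpow_mul_sub hδ0 hδ1 one_pos hx

lemma mul_le_sub_add_mul_of_le_tangents {φ : ℝ → ℝ} {x c g : ℝ}
    (htan₁ : φ x ≤ x - 1) (htan_c : φ x ≤ φ c + (x - c) / 2) (hc : φ c ≤ c - 1)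
    (hg0 : 0 ≤ g) (hg : g ≤ 1 / 2) :
    x * g ≤ x - 1 - φ x + c * g := by
  rcases le_or_gt x c with hxc | hcx
  · nlinarith [mul_le_mul_of_nonneg_right hxc hg0]
  · nlinarith [mul_le_mul_of_nonneg_left hg (sub_nonneg.2 hcx.le)]

lemma two_rpow_inv_one_sub_rpow_sub_one {δ : ℝ} (hδ : δ ≠ 1) :
    ((2 : ℝ) ^ (1 / (1 - δ))) ^ (δ - 1) = 1 / 2 := by
  rw [← rpow_mul zero_le_two, show 1 / (1 - δ) * (δ - 1) = -1 by
    field_simp [sub_ne_zero.2 hδ.symm]; ring, rpow_neg_one, one_div]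

lemma mul_le_sub_boxCox_add {δ x g : ℝ} (hδ : δ ∈ Set.Ico (0 : ℝ) 1) (hx : 0 < x)
    (hg0 : 0 ≤ g) (hg : g ≤ 1 / 2) :
    x * g ≤ x - 1 - boxCox δ x + (2 : ℝ) ^ (1 / (1 - δ)) * g := by
  obtain ⟨hδ0, hδ1⟩ := hδ
  have hC : 0 < (2 : ℝ) ^ (1 / (1 - δ)) := rpow_pos_of_pos two_pos _
  have htan_C := boxCox_le_add_rpow_mul_sub hδ0 hδ1.le hC hx
  rw [two_rpow_inv_one_sub_rpow_sub_one hδ1.ne] at htan_C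
  exact mul_le_sub_add_mul_of_le_tangents (boxCox_le_sub_one hδ0 hδ1.le hx)
    (by linarith) (boxCox_le_sub_one hδ0 hδ1.le hC) hg0 hg

lemma mul_boxCox_div {δ θ θt : ℝ} (hθ : 0 < θ) (hθt : 0 < θt) :
    θt * boxCox δ (θ / θt) = if δ = 0 then θt * (log θ - log θt)
      else (1 / δ) * θt ^ (1 - δ) * (θ ^ δ - θt ^ δ) := by
  unfold boxCox
  split_ifs with hδ
  · rw [log_div hθ.ne' hθt.ne']
  · rw [div_rpow hθ.le hθt.le, rpow_sub hθt, rpow_one]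
    field_simp [(rpow_pos_of_pos hθt δ).ne']

/-- Pointwise version of Lemma 2.9: for `δ ∈ [0,1)`, `θ, θ̃ > 0` and
`g ∈ [0, 1/2]`,
`(θ/θ̃) g ≤ (1/θ̃)(θ - θ̃ - (f_δ''(θ̃))⁻¹(f_δ'(θ) - f_δ'(θ̃))) + 2^(1/(1-δ)) g`,
where the correction term equals `θ̃ (log θ - log θ̃)` for `δ = 0` and
`(1/δ) θ̃^(1-δ)(θ^δ - θ̃^δ)` for `δ ∈ (0,1)`. -/
theorem stmt15 (δ : ℝ) (hδ : δ ∈ Set.Ico (0 : ℝ) 1)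
    (corr : ℝ → ℝ → ℝ)
    (hcorr : corr = fun θ θt =>
      if δ = 0 then θt * (Real.log θ - Real.log θt)
      else (1 / δ) * θt ^ (1 - δ) * (θ ^ δ - θt ^ δ)) :
    ∀ θ θt g : ℝ, 0 < θ → 0 < θt → 0 ≤ g → g ≤ 1 / 2 →
      (θ / θt) * g
        ≤ (1 / θt) * (θ - θt - corr θ θt) + (2 : ℝ) ^ (1 / (1 - δ)) * g := by
  intro θ θt g hθ hθt hg0 hg
  have hcorr_eq : corr θ θt = θt * boxCox δ (θ / θt) := by
    rw [hcorr, mul_boxCox_div hθ hθt]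
  have hscale : (1 / θt) * (θ - θt - θt * boxCox δ (θ / θt))
      = θ / θt - 1 - boxCox δ (θ / θt) := by
    field_simp
  rw [hcorr_eq, hscale]
  exact mul_le_sub_boxCox_add hδ (div_pos hθ hθt) hg0 hg
end
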